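/- arXiv:2302.02304 — 2 statements merged into one kernel-verified Lean document; each statement's English description precedes it below -/
import Mathlib

section
/- For any theta, theta' in R^C, the Hellinger distance between the corresponding softmax distributions satisfies d_H(softmax(theta), softmax(theta')) <= (1/2) * ||theta - theta'||_2; in particular the squared Hellinger distance is at most (1/4) * ||theta - theta'||_2^2. -/
/-- The Hellinger distance between two probability vectors on `C` categories. -/
noncomputable def hellinger {C : ℕ} (p q : Fin C → ℝ) : ℝ :=
  Real.sqrt (∑ c, (Real.sqrt (p c) - Real.sqrt (q c)) ^ 2)

/-- The softmax map sending `θ ∈ ℝ^C` to a probability vector on `C` categories. -/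
noncomputable def softmax {C : ℕ} (θ : Fin C → ℝ) (c : Fin C) : ℝ :=
  Real.exp (θ c) / ∑ c', Real.exp (θ c')

/-- the Hellinger distance between two softmax distributions is at most
half the Euclidean distance between the underlying parameters; in particular the
squared Hellinger distance is at most a quarter of the squared Euclidean distance. -/
theorem hellinger_softmax_le {C : ℕ} (θ θ' : Fin C → ℝ) :
    hellinger (softmax θ) (softmax θ') ≤ (1 / 2) * Real.sqrt (∑ c, (θ c - θ' c) ^ 2) ∧
    (hellinger (softmax θ) (softmax θ')) ^ 2 ≤ (1 / 4) * ∑ c, (θ c - θ' c) ^ 2 := by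
  set S := ∑ c, (θ c - θ' c) ^ 2 with hS
  have hSnn : 0 ≤ S := Finset.sum_nonneg fun c _ => sq_nonneg _
  have hH2nn : 0 ≤ ∑ c, (Real.sqrt (softmax θ c) - Real.sqrt (softmax θ' c)) ^ 2 :=
    Finset.sum_nonneg fun c _ => sq_nonneg _
  have key : ∑ c, (Real.sqrt (softmax θ c) - Real.sqrt (softmax θ' c)) ^ 2
      ≤ (1 / 4) * S := by
    rcases Nat.eq_zero_or_pos C with h0 | hpos
    · subst h0
      simp only [Finset.univ_eq_empty, Finset.sum_empty]
      positivity
    · haveI : Nonempty (Fin C) := Fin.pos_iff_nonempty.mp hpos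
      set Z := ∑ c, Real.exp (θ c) with hZ
      set Z' := ∑ c, Real.exp (θ' c) with hZ'
      set M := ∑ c, Real.exp ((θ c + θ' c) / 2) with hM
      have hZpos : 0 < Z := Finset.sum_pos (fun c _ => Real.exp_pos _) Finset.univ_nonempty
      have hZ'pos : 0 < Z' := Finset.sum_pos (fun c _ => Real.exp_pos _) Finset.univ_nonempty
      have hMpos : 0 < M := Finset.sum_pos (fun c _ => Real.exp_pos _) Finset.univ_nonempty
      -- sums of softmax are 1
      have hsum1 : ∑ c, softmax θ c = 1 := by
        simp only [softmax, ← hZ, ← Finset.sum_div]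
        exact div_self hZpos.ne'
      have hsum1' : ∑ c, softmax θ' c = 1 := by
        simp only [softmax, ← hZ', ← Finset.sum_div]
        exact div_self hZ'pos.ne'
      -- square roots of softmax
      have hsqrtp : ∀ c, Real.sqrt (softmax θ c) = Real.exp (θ c / 2) / Real.sqrt Z := by
        intro c
        rw [softmax, ← hZ, Real.sqrt_div (Real.exp_nonneg _), Real.exp_half]
      have hsqrtq : ∀ c, Real.sqrt (softmax θ' c) = Real.exp (θ' c / 2) / Real.sqrt Z' := by
        intro c
        rw [softmax, ← hZ', Real.sqrt_div (Real.exp_nonneg _), Real.exp_half]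
      -- Bhattacharyya coefficient
      have hBC : ∑ c, Real.sqrt (softmax θ c) * Real.sqrt (softmax θ' c)
          = M / Real.sqrt (Z * Z') := by
        rw [Real.sqrt_mul hZpos.le, hM, Finset.sum_div]
        refine Finset.sum_congr rfl fun c _ => ?_
        rw [hsqrtp c, hsqrtq c, div_mul_div_comm, ← Real.exp_add]
        congr 2
        ring
      -- expansion of the squared Hellinger distance
      have hexpand : ∑ c, (Real.sqrt (softmax θ c) - Real.sqrt (softmax θ' c)) ^ 2
          = 2 - 2 * (M / Real.sqrt (Z * Z')) := by
        have hpt : ∀ c, (Real.sqrt (softmax θ c) - Real.sqrt (softmax θ' c)) ^ 2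
            = softmax θ c + softmax θ' c
              - 2 * (Real.sqrt (softmax θ c) * Real.sqrt (softmax θ' c)) := by
          intro c
          have h1 : 0 ≤ softmax θ c := div_nonneg (Real.exp_nonneg _) hZpos.le
          have h2 : 0 ≤ softmax θ' c := div_nonneg (Real.exp_nonneg _) hZ'pos.le
          rw [sub_sq, Real.sq_sqrt h1, Real.sq_sqrt h2]
          ring
        rw [Finset.sum_congr rfl fun c _ => hpt c]
        rw [Finset.sum_sub_distrib, Finset.sum_add_distrib, hsum1, hsum1',
          ← Finset.mul_sum, hBC]
        norm_num
      -- key inequality : Z * Z' ≤ M ^ 2 * exp (S / 4)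
      have hZZ' : Z * Z' ≤ M ^ 2 * Real.exp (S / 4) := by
        have pair : ∀ c c' : Fin C,
            Real.exp (θ c + θ' c') + Real.exp (θ c' + θ' c)
            ≤ 2 * (Real.exp ((θ c + θ' c) / 2) * Real.exp ((θ c' + θ' c') / 2)
                * Real.exp (S / 4)) := by
          intro c c'
          have hd : ((θ c - θ' c) - (θ c' - θ' c')) ^ 2 ≤ 2 * S := by
            by_cases hcc : c = c'
            · subst hcc
              have h0 : ((θ c - θ' c) - (θ c - θ' c)) ^ 2 = 0 := by ring
              rw [h0]; linarith
            · have h1 : (θ c - θ' c) ^ 2 + (θ c' - θ' c') ^ 2 ≤ S := by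
                have hsub : ({c, c'} : Finset (Fin C)) ⊆ Finset.univ := Finset.subset_univ _
                have := Finset.sum_le_sum_of_subset_of_nonneg hsub
                  (fun i _ _ => sq_nonneg (θ i - θ' i))
                rwa [Finset.sum_pair hcc] at this
              nlinarith [sq_nonneg ((θ c - θ' c) + (θ c' - θ' c'))]
          set a := θ c + θ' c' with ha
          set b := θ c' + θ' c with hb
          have hid : Real.exp a + Real.exp b
              = 2 * Real.exp ((a + b) / 2) * Real.cosh ((a - b) / 2) := by
            rw [Real.cosh_eq]
            have : 2 * Real.exp ((a + b) / 2)
                * ((Real.exp ((a - b) / 2) + Real.exp (-((a - b) / 2))) / 2)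
                = Real.exp ((a + b) / 2 + (a - b) / 2)
                  + Real.exp ((a + b) / 2 + -((a - b) / 2)) := by
              rw [Real.exp_add, Real.exp_add]; ring
            rw [this, show (a + b) / 2 + (a - b) / 2 = a by ring,
              show (a + b) / 2 + -((a - b) / 2) = b by ring]
          have hcosh : Real.cosh ((a - b) / 2) ≤ Real.exp (S / 4) := by
            refine (Real.cosh_le_exp_half_sq _).trans (Real.exp_le_exp.mpr ?_)
            have : ((a - b) / 2) ^ 2 = ((θ c - θ' c) - (θ c' - θ' c')) ^ 2 / 4 := by
              rw [ha, hb]; ring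
            rw [this]
            linarith
          have hmid : Real.exp ((a + b) / 2)
              = Real.exp ((θ c + θ' c) / 2) * Real.exp ((θ c' + θ' c') / 2) := by
            rw [← Real.exp_add]
            congr 1
            rw [ha, hb]; ring
          calc Real.exp a + Real.exp b
              = 2 * Real.exp ((a + b) / 2) * Real.cosh ((a - b) / 2) := hid
            _ ≤ 2 * Real.exp ((a + b) / 2) * Real.exp (S / 4) := by
                have h2 : 0 ≤ 2 * Real.exp ((a + b) / 2) := by positivity
                exact mul_le_mul_of_nonneg_left hcosh h2
            _ = 2 * (Real.exp ((θ c + θ' c) / 2) * Real.exp ((θ c' + θ' c') / 2)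
                * Real.exp (S / 4)) := by rw [hmid]; ring
        have h1 : Z * Z' = ∑ c, ∑ c', Real.exp (θ c + θ' c') := by
          rw [hZ, hZ', Finset.sum_mul_sum]
          exact Finset.sum_congr rfl fun c _ =>
            Finset.sum_congr rfl fun c' _ => (Real.exp_add _ _).symm
        have h2 : Z * Z' = ∑ c, ∑ c', Real.exp (θ c' + θ' c) := by
          rw [h1]; exact Finset.sum_comm
        have h3 : M ^ 2 * Real.exp (S / 4)
            = ∑ c, ∑ c', Real.exp ((θ c + θ' c) / 2) * Real.exp ((θ c' + θ' c') / 2)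
              * Real.exp (S / 4) := by
          rw [sq, hM, Finset.sum_mul_sum, Finset.sum_mul]
          exact Finset.sum_congr rfl fun c _ => by rw [Finset.sum_mul]
        have hsum2 : 2 * (Z * Z') ≤ 2 * (M ^ 2 * Real.exp (S / 4)) := by
          calc 2 * (Z * Z')
              = ∑ c, ∑ c', (Real.exp (θ c + θ' c') + Real.exp (θ c' + θ' c)) := by
                simp only [Finset.sum_add_distrib, ← h1, ← h2]; ring
            _ ≤ ∑ c, ∑ c', 2 * (Real.exp ((θ c + θ' c) / 2)
                  * Real.exp ((θ c' + θ' c') / 2) * Real.exp (S / 4)) :=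
                Finset.sum_le_sum fun c _ => Finset.sum_le_sum fun c' _ => pair c c'
            _ = 2 * (M ^ 2 * Real.exp (S / 4)) := by
                simp only [← Finset.mul_sum, ← h3]
        linarith
      -- bound on the Bhattacharyya coefficient
      have hsqrtZZ : Real.sqrt (Z * Z') ≤ M * Real.exp (S / 8) := by
        have h := Real.sqrt_le_sqrt hZZ'
        rwa [Real.sqrt_mul (sq_nonneg M),
          show Real.exp (S / 4) = Real.exp (S / 8) ^ 2 from by
            rw [sq, ← Real.exp_add]; ring_nf,
          Real.sqrt_sq hMpos.le, Real.sqrt_sq (Real.exp_nonneg _)] at h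
      have hsqrtpos : 0 < Real.sqrt (Z * Z') :=
        Real.sqrt_pos.mpr (mul_pos hZpos hZ'pos)
      have hBCge : Real.exp (-(S / 8)) ≤ M / Real.sqrt (Z * Z') := by
        rw [le_div_iff₀ hsqrtpos]
        calc Real.exp (-(S / 8)) * Real.sqrt (Z * Z')
            ≤ Real.exp (-(S / 8)) * (M * Real.exp (S / 8)) :=
              mul_le_mul_of_nonneg_left hsqrtZZ (Real.exp_nonneg _)
          _ = M * (Real.exp (-(S / 8)) * Real.exp (S / 8)) := by ring
          _ = M := by rw [← Real.exp_add]; simp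
      have hlin : 1 - S / 8 ≤ Real.exp (-(S / 8)) := by
        have := Real.add_one_le_exp (-(S / 8))
        linarith
      rw [hexpand]
      linarith
  constructor
  · rw [hellinger]
    refine (Real.sqrt_le_sqrt key).trans_eq ?_
    rw [show (1 / 4 : ℝ) * S = ((1 / 2) * Real.sqrt S) ^ 2 from by
        rw [mul_pow, Real.sq_sqrt hSnn]; norm_num]
    exact Real.sqrt_sq (by positivity)
  · rw [hellinger, Real.sq_sqrt hH2nn]
    exact key
end

section
/- There exists a constant c > 0 depending only on C, k and tau_2 such that for any two parameters gamma = (gamma_t, gamma_w) and gamma~ = (gamma~_t, gamma~_w) of the latent factor crowdsourcing model all of whose entries are bounded in absolute value by tau_2, the averaged Hellinger distance between the induced arrays of label distributions satisfies H_S(p(gamma), p(gamma~))^2 <= c * ((1/m) * ||gamma_t - gamma~_t||_F^2 + (1/n) * ||gamma_w - gamma~_w||_F^2), where ||.||_F is the Frobenius norm. -/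
open Finset

/-- The squared Hellinger distance between two probability vectors on `C` categories. -/
noncomputable def hellingerSq {C : ℕ} (p q : Fin C → ℝ) : ℝ :=
  ∑ c, (Real.sqrt (p c) - Real.sqrt (q c)) ^ 2

/-- The label distribution of task `i` by worker `j` in the latent factor
crowdsourcing model with task factors `γt` and worker-category factors `γw`. -/
noncomputable def labelProb {m n C k : ℕ} (γt : Fin m → Fin k → ℝ)
    (γw : Fin n → Fin C → Fin k → ℝ) (i : Fin m) (j : Fin n) : Fin C → ℝ :=
  softmax (fun c => ∑ l, γt i l * γw j c l)

/-- The averaged Hellinger distance between the arrays of label distributions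
induced by two parameters of the latent factor crowdsourcing model. -/
noncomputable def HSparam {m n C k : ℕ} (γt : Fin m → Fin k → ℝ)
    (γw : Fin n → Fin C → Fin k → ℝ) (γt' : Fin m → Fin k → ℝ)
    (γw' : Fin n → Fin C → Fin k → ℝ) : ℝ :=
  Real.sqrt ((1 / (m * n : ℝ)) *
    ∑ i, ∑ j, hellingerSq (labelProb γt γw i j) (labelProb γt' γw' i j))

/-!
Writing `√(softmax θ c) = exp ((θ c - log ∑ exp θ) / 2)` puts the exponent in `(-∞, 0]`, where
`exp` is `1`-Lipschitz, and the log-partition function `log ∑ exp θ` is `1`-Lipschitz for the sup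
norm. Hence `hellingerSq (softmax θ) (softmax θ') ≤ (C + 1) / 2 · ‖θ - θ'‖²` for all logits.
The bound on the factors enters only through `(a·b - a'·b')² ≤ 2 k τ² (‖a - a'‖² + ‖b - b'‖²)`
for the logits; averaging over tasks and workers then gives the theorem.
-/

open Real

namespace Real

lemma abs_exp_sub_exp_le_of_nonpos {x y : ℝ} (hx : x ≤ 0) (hy : y ≤ 0) :
    |exp x - exp y| ≤ |x - y| := by
  wlog hyx : y ≤ x generalizing x y
  · rw [abs_sub_comm, abs_sub_comm x]
    exact this hy hx (le_of_not_ge hyx)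
  have hexp : exp x * exp (y - x) = exp y := by
    rw [← exp_add]; ring_nf
  have hx1 : exp x ≤ 1 := exp_le_one_iff.2 hx
  rw [abs_of_nonneg (sub_nonneg.2 (exp_le_exp.2 hyx)), abs_of_nonneg (sub_nonneg.2 hyx)]
  nlinarith [add_one_le_exp (y - x), exp_pos x]

variable {ι : Type*} [Fintype ι] [Nonempty ι] {θ θ' : ι → ℝ} {D : ℝ}

lemma log_sum_exp_le_of_le (h : ∀ i, θ i ≤ θ' i + D) :
    log (∑ i, exp (θ i)) ≤ log (∑ i, exp (θ' i)) + D := by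
  have hpos : 0 < ∑ i, exp (θ' i) := Finset.sum_pos (fun _ _ ↦ exp_pos _) univ_nonempty
  have hle : ∑ i, exp (θ i) ≤ exp D * ∑ i, exp (θ' i) := by
    rw [Finset.mul_sum]
    gcongr with i
    rw [← exp_add, add_comm D]
    exact exp_le_exp.2 (h i)
  calc log (∑ i, exp (θ i))
      ≤ log (exp D * ∑ i, exp (θ' i)) :=
        log_le_log (Finset.sum_pos (fun _ _ ↦ exp_pos _) univ_nonempty) hle
    _ = log (∑ i, exp (θ' i)) + D := by
        rw [log_mul (exp_pos D).ne' hpos.ne', log_exp, add_comm]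

lemma abs_log_sum_exp_sub_le (h : ∀ i, |θ i - θ' i| ≤ D) :
    |log (∑ i, exp (θ i)) - log (∑ i, exp (θ' i))| ≤ D := by
  rw [abs_sub_le_iff]
  constructor
  · have := log_sum_exp_le_of_le fun i ↦
      show θ i ≤ θ' i + D by linarith [le_abs_self (θ i - θ' i), h i]
    linarith
  · have := log_sum_exp_le_of_le fun i ↦
      show θ' i ≤ θ i + D by linarith [neg_abs_le (θ i - θ' i), h i]
    linarith

end Real

section Softmax

variable {C : ℕ}

lemma sqrt_softmax (θ : Fin C → ℝ) (c : Fin C) :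
    √(softmax θ c) = exp ((θ c - log (∑ c', exp (θ c'))) / 2) := by
  have hpos : 0 < ∑ c', exp (θ c') := Finset.sum_pos (fun _ _ ↦ exp_pos _) ⟨c, mem_univ c⟩
  rw [exp_half, exp_sub, exp_log hpos, softmax]

lemma le_log_sum_exp (θ : Fin C → ℝ) (c : Fin C) : θ c ≤ log (∑ c', exp (θ c')) :=
  (le_log_iff_exp_le (Finset.sum_pos (fun _ _ ↦ exp_pos _) ⟨c, mem_univ c⟩)).2
    (Finset.single_le_sum (f := fun c' ↦ exp (θ c')) (fun _ _ ↦ (exp_pos _).le) (mem_univ c))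

lemma hellingerSq_nonneg (p q : Fin C → ℝ) : 0 ≤ hellingerSq p q :=
  Finset.sum_nonneg fun _ _ ↦ sq_nonneg _

theorem hellingerSq_softmax_le (θ θ' : Fin C → ℝ) :
    hellingerSq (softmax θ) (softmax θ') ≤ ((C : ℝ) + 1) / 2 * ∑ c, (θ c - θ' c) ^ 2 := by
  set Q := ∑ c, (θ c - θ' c) ^ 2
  set L := log (∑ c, exp (θ c)) - log (∑ c, exp (θ' c))
  have hentry (c : Fin C) :
      (√(softmax θ c) - √(softmax θ' c)) ^ 2 ≤ ((θ c - θ' c) ^ 2 + Q) / 2 := by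
    have : Nonempty (Fin C) := ⟨c⟩
    have hδ (c' : Fin C) : |θ c' - θ' c'| ≤ √Q := abs_le_sqrt <|
      Finset.single_le_sum (f := fun c ↦ (θ c - θ' c) ^ 2) (fun _ _ ↦ sq_nonneg _) (mem_univ c')
    have hL : L ^ 2 ≤ Q := by
      calc L ^ 2 = |L| ^ 2 := (sq_abs L).symm
        _ ≤ √Q ^ 2 := by gcongr; exact abs_log_sum_exp_sub_le hδ
        _ = Q := sq_sqrt (Finset.sum_nonneg fun _ _ ↦ sq_nonneg _)
    have hsqrt : (√(softmax θ c) - √(softmax θ' c)) ^ 2 ≤ ((θ c - θ' c - L) / 2) ^ 2 := by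
      rw [sqrt_softmax, sqrt_softmax, sq_le_sq]
      refine (abs_exp_sub_exp_le_of_nonpos ?_ ?_).trans_eq (by simp only [L]; ring_nf)
      · linarith [le_log_sum_exp θ c]
      · linarith [le_log_sum_exp θ' c]
    nlinarith [sq_nonneg (θ c - θ' c + L)]
  calc hellingerSq (softmax θ) (softmax θ')
      ≤ ∑ c, ((θ c - θ' c) ^ 2 + Q) / 2 := Finset.sum_le_sum fun c _ ↦ hentry c
    _ = ((C : ℝ) + 1) / 2 * Q := by
        rw [← Finset.sum_div, Finset.sum_add_distrib, Finset.sum_const, card_univ,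
          Fintype.card_fin, nsmul_eq_mul]
        ring

end Softmax

section Bilinear

variable {ι : Type*} [Fintype ι] {τ : ℝ}

lemma sum_sq_le_card_mul_sq {b : ι → ℝ} (hb : ∀ l, |b l| ≤ τ) :
    ∑ l, b l ^ 2 ≤ Fintype.card ι * τ ^ 2 := by
  calc ∑ l, b l ^ 2 ≤ ∑ _l : ι, τ ^ 2 := Finset.sum_le_sum fun l _ ↦ by
        rw [← sq_abs]; exact pow_le_pow_left₀ (abs_nonneg _) (hb l) 2
    _ = Fintype.card ι * τ ^ 2 := by rw [Finset.sum_const, card_univ, nsmul_eq_mul]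

lemma sq_sum_mul_sub_sum_mul_le (a a' b b' : ι → ℝ)
    (ha' : ∀ l, |a' l| ≤ τ) (hb : ∀ l, |b l| ≤ τ) :
    (∑ l, a l * b l - ∑ l, a' l * b' l) ^ 2 ≤
      2 * (Fintype.card ι * τ ^ 2) * (∑ l, (a l - a' l) ^ 2 + ∑ l, (b l - b' l) ^ 2) := by
  have hsplit : ∑ l, a l * b l - ∑ l, a' l * b' l =
      ∑ l, (a l - a' l) * b l + ∑ l, a' l * (b l - b' l) := by
    rw [← Finset.sum_sub_distrib, ← Finset.sum_add_distrib]
    exact Finset.sum_congr rfl fun l _ ↦ by ring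
  have hx := (Finset.sum_mul_sq_le_sq_mul_sq univ (fun l ↦ a l - a' l) b).trans
    (mul_le_mul_of_nonneg_left (sum_sq_le_card_mul_sq hb)
      (Finset.sum_nonneg fun _ _ ↦ sq_nonneg _))
  have hy := (Finset.sum_mul_sq_le_sq_mul_sq univ a' (fun l ↦ b l - b' l)).trans
    (mul_le_mul_of_nonneg_right (sum_sq_le_card_mul_sq ha')
      (Finset.sum_nonneg fun _ _ ↦ sq_nonneg _))
  rw [hsplit]
  nlinarith [add_sq_le (a := ∑ l, (a l - a' l) * b l) (b := ∑ l, a' l * (b l - b' l))]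

end Bilinear

theorem hellingerSq_labelProb_le {m n C k : ℕ} {τ : ℝ} (γt γt' : Fin m → Fin k → ℝ)
    (γw γw' : Fin n → Fin C → Fin k → ℝ) (i : Fin m) (j : Fin n)
    (hγt' : ∀ l, |γt' i l| ≤ τ) (hγw : ∀ c l, |γw j c l| ≤ τ) :
    hellingerSq (labelProb γt γw i j) (labelProb γt' γw' i j) ≤
      ((C : ℝ) + 1) ^ 2 * (k * τ ^ 2) *
        (∑ l, (γt i l - γt' i l) ^ 2 + ∑ c, ∑ l, (γw j c l - γw' j c l) ^ 2) := by
  set A := ∑ l, (γt i l - γt' i l) ^ 2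
  set B := ∑ c, ∑ l, (γw j c l - γw' j c l) ^ 2
  have hA : 0 ≤ A := Finset.sum_nonneg fun _ _ ↦ sq_nonneg _
  have hB : 0 ≤ B := Finset.sum_nonneg fun _ _ ↦ Finset.sum_nonneg fun _ _ ↦ sq_nonneg _
  have hlogits : ∑ c, (∑ l, γt i l * γw j c l - ∑ l, γt' i l * γw' j c l) ^ 2 ≤
      2 * (k * τ ^ 2) * (C * A + B) := by
    calc _ ≤ ∑ c, 2 * (k * τ ^ 2) * (A + ∑ l, (γw j c l - γw' j c l) ^ 2) :=
          Finset.sum_le_sum fun c _ ↦ by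
            simpa using
              sq_sum_mul_sub_sum_mul_le (γt i) (γt' i) (γw j c) (γw' j c) hγt' (hγw c)
      _ = 2 * (k * τ ^ 2) * (C * A + B) := by
          rw [← Finset.mul_sum, Finset.sum_add_distrib, Finset.sum_const, card_univ,
            Fintype.card_fin, nsmul_eq_mul]
  have hCAB : (C : ℝ) * A + B ≤ ((C : ℝ) + 1) * (A + B) := by
    nlinarith [mul_nonneg (Nat.cast_nonneg C : (0 : ℝ) ≤ C) hB]
  calc hellingerSq (labelProb γt γw i j) (labelProb γt' γw' i j)
      ≤ ((C : ℝ) + 1) / 2 * (2 * (k * τ ^ 2) * (C * A + B)) :=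
        (hellingerSq_softmax_le _ _).trans (by gcongr)
    _ = ((C : ℝ) + 1) * (k * τ ^ 2) * (C * A + B) := by ring
    _ ≤ ((C : ℝ) + 1) * (k * τ ^ 2) * (((C : ℝ) + 1) * (A + B)) := by gcongr
    _ = ((C : ℝ) + 1) ^ 2 * (k * τ ^ 2) * (A + B) := by ring

lemma avg_sum_sum_add {m n : ℕ} (hm : 0 < m) (hn : 0 < n) (A : Fin m → ℝ) (B : Fin n → ℝ) :
    1 / (m * n : ℝ) * ∑ i, ∑ j, (A i + B j) =
      1 / (m : ℝ) * ∑ i, A i + 1 / (n : ℝ) * ∑ j, B j := by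
  simp only [Finset.sum_add_distrib, Finset.sum_const, card_univ, Fintype.card_fin,
    nsmul_eq_mul, ← Finset.mul_sum]
  field_simp

theorem HS_le_frobenius_general (C k : ℕ) (τ₂ : ℝ) :
    ∃ c : ℝ, 0 < c ∧
      ∀ (m n : ℕ), 0 < m → 0 < n →
      ∀ (γt γt' : Fin m → Fin k → ℝ) (γw γw' : Fin n → Fin C → Fin k → ℝ),
        (∀ i l, |γt i l| ≤ τ₂) → (∀ j c' l, |γw j c' l| ≤ τ₂) →
        (∀ i l, |γt' i l| ≤ τ₂) → (∀ j c' l, |γw' j c' l| ≤ τ₂) →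
        (HSparam γt γw γt' γw') ^ 2 ≤
          c * ((1 / (m : ℝ)) * (∑ i, ∑ l, (γt i l - γt' i l) ^ 2) +
               (1 / (n : ℝ)) * (∑ j, ∑ c', ∑ l, (γw j c' l - γw' j c' l) ^ 2)) := by
  set K : ℝ := ((C : ℝ) + 1) ^ 2 * (k * τ₂ ^ 2 + 1)
  refine ⟨K, by positivity, fun m n hm hn γt γt' γw γw' _ hγw hγt' _ ↦ ?_⟩
  set A : Fin m → ℝ := fun i ↦ ∑ l, (γt i l - γt' i l) ^ 2
  set B : Fin n → ℝ := fun j ↦ ∑ c', ∑ l, (γw j c' l - γw' j c' l) ^ 2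
  have hentry (i : Fin m) (j : Fin n) :
      hellingerSq (labelProb γt γw i j) (labelProb γt' γw' i j) ≤ K * (A i + B j) := by
    refine (hellingerSq_labelProb_le γt γt' γw γw' i j (hγt' i) (hγw j)).trans ?_
    have hAB : 0 ≤ A i + B j := by positivity
    have hK : ((C : ℝ) + 1) ^ 2 * (k * τ₂ ^ 2) ≤ K := by simp only [K]; gcongr; linarith
    gcongr
  rw [HSparam, sq_sqrt <| mul_nonneg (by positivity) <|
    Finset.sum_nonneg fun _ _ ↦ Finset.sum_nonneg fun _ _ ↦ hellingerSq_nonneg _ _]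
  calc 1 / (m * n : ℝ) * ∑ i, ∑ j, hellingerSq (labelProb γt γw i j) (labelProb γt' γw' i j)
      ≤ 1 / (m * n : ℝ) * ∑ i, ∑ j, K * (A i + B j) := by
        gcongr with i _ j _; exact hentry i j
    _ = K * (1 / (m : ℝ) * ∑ i, A i + 1 / (n : ℝ) * ∑ j, B j) := by
        simp only [← Finset.mul_sum]
        rw [← avg_sum_sum_add hm hn]
        ring

/-- there is a constant `c > 0`, depending only on `C`, `k` and `τ₂`,
such that for any two parameters with all entries bounded by `τ₂` in absolute value,
the squared averaged Hellinger distance between the induced arrays of label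
distributions is bounded by `c` times the scaled squared Frobenius distances of
the parameters. -/
theorem HS_le_frobenius (C k : ℕ) (τ₂ : ℝ) (hτ₂ : 0 ≤ τ₂) :
    ∃ c : ℝ, 0 < c ∧
      ∀ (m n : ℕ), 0 < m → 0 < n →
      ∀ (γt γt' : Fin m → Fin k → ℝ) (γw γw' : Fin n → Fin C → Fin k → ℝ),
        (∀ i l, |γt i l| ≤ τ₂) → (∀ j c' l, |γw j c' l| ≤ τ₂) →
        (∀ i l, |γt' i l| ≤ τ₂) → (∀ j c' l, |γw' j c' l| ≤ τ₂) →
        (HSparam γt γw γt' γw') ^ 2 ≤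
          c * ((1 / (m : ℝ)) * (∑ i, ∑ l, (γt i l - γt' i l) ^ 2) +
               (1 / (n : ℝ)) * (∑ j, ∑ c', ∑ l, (γw j c' l - γw' j c' l) ^ 2)) :=
  HS_le_frobenius_general C k τ₂
end
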